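/- arXiv:2012.14621 — 2 statements merged into one kernel-verified Lean document; each statement's English description precedes it below -/
import Mathlib

section
/- Let ν > 0 and let u^L : ℝ₊ × 𝕋 → ℝ be a smooth solution of the one-dimensional heat equation ∂ₜu^L = ν ∂²_{x₂}u^L, and let u^S : ℝ₊ × 𝕋² → ℝ be a smooth solution of the advection–diffusion equation ∂ₜu^S + u^L(t,x₂)∂_{x₁}u^S = ν(∂²_{x₁} + ∂²_{x₂})u^S. Then the vector field u(t, x₁, x₂, x₃) = (u^L(t,x₂), 0, u^S(t,x₁,x₂)) on ℝ₊ × 𝕋³ is divergence-free and, together with the constant pressure p ≡ 0, solves the incompressible 3D Navier–Stokes equations ∂ₜu + u·∇u + ∇p = νΔu, ∇·u = 0, with zero external force. -/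
open MeasureTheory Real

noncomputable section

/-- Partial derivative of a function on `ℝ³` in the `j`-th coordinate direction. -/
def pd (j : Fin 3) (h : (Fin 3 → ℝ) → ℝ) (x : Fin 3 → ℝ) : ℝ :=
  deriv (fun s => h (Function.update x j s)) (x j)

/-- The `2 + ½`-dimensional velocity field
`u(t, x₁, x₂, x₃) = (u^L(t,x₂), 0, u^S(t,x₁,x₂))`. -/
def field (uL : ℝ → ℝ → ℝ) (uS : ℝ → ℝ → ℝ → ℝ) (t : ℝ) (x : Fin 3 → ℝ) : Fin 3 → ℝ :=
  ![uL t (x 1), 0, uS t (x 0) (x 1)]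

/-- If `u^L` solves the 1D heat equation and `u^S` solves the advection–diffusion equation
with shear `u^L`, then `(u^L(t,x₂), 0, u^S(t,x₁,x₂))` is divergence free and, with constant
pressure `p ≡ 0`, solves the incompressible 3D Navier–Stokes equations with zero force. -/
theorem two_and_half_dimensional_reduction
    (ν : ℝ) (hν : 0 < ν)
    (uL : ℝ → ℝ → ℝ) (uS : ℝ → ℝ → ℝ → ℝ)
    (hLsmooth : ContDiff ℝ (⊤ : ℕ∞) ↿uL)
    (hLper : ∀ t, Function.Periodic (uL t) 1)
    (hSsmooth : ContDiff ℝ (⊤ : ℕ∞) ↿uS)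
    (hSper1 : ∀ t x₂, Function.Periodic (fun x₁ => uS t x₁ x₂) 1)
    (hSper2 : ∀ t x₁, Function.Periodic (fun x₂ => uS t x₁ x₂) 1)
    (hheat : ∀ t, 0 ≤ t → ∀ x₂ : ℝ,
      deriv (fun s => uL s x₂) t = ν * deriv (deriv (uL t)) x₂)
    (hadv : ∀ t, 0 ≤ t → ∀ x₁ x₂ : ℝ,
      deriv (fun s => uS s x₁ x₂) t + uL t x₂ * deriv (fun y => uS t y x₂) x₁
        = ν * (deriv (fun y => deriv (fun z => uS t z x₂) y) x₁
            + deriv (fun y => deriv (fun z => uS t x₁ z) y) x₂)) :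
    (∀ t, 0 ≤ t → ∀ x : Fin 3 → ℝ,
      (∑ j, pd j (fun y => field uL uS t y j) x) = 0) ∧
    (∀ t, 0 ≤ t → ∀ x : Fin 3 → ℝ, ∀ i : Fin 3,
      deriv (fun s => field uL uS s x i) t
        + (∑ j, field uL uS t x j * pd j (fun y => field uL uS t y i) x)
        + pd i (fun _ => (0 : ℝ)) x
        = ν * ∑ j, pd j (fun y => pd j (fun z => field uL uS t z i) y) x) := by
  constructor
  · intro t ht x
    simp [pd, _root_.field, Fin.sum_univ_three, Function.update]
  · intro t ht x i
    fin_cases i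
    · simp only [pd, _root_.field, Fin.sum_univ_three]
      simp [Function.update]
      rw [hheat t ht (x 1)]
    · simp [pd, _root_.field, Fin.sum_univ_three, Function.update]
    · simp only [pd, _root_.field, Fin.sum_univ_three]
      simp [Function.update]
      have := hadv t ht (x 0) (x 1)
      linarith
end
end

section
/- Let T : 𝕋 → ℝ be a smooth function with the sine expansion T(z) = Σ_{i≥1} aᵢ sin(2(2i−1)πz), where the coefficients satisfy Σ_{i≥2} |aᵢ|(2i−1)² < ∞. Let ν ∈ (0,1] be such that ν^{-1/2} is a positive integer, set u₀^L(x₂) = T(ν^{-1/2}x₂), let u^L(t,x₂) = Σ_{i≥1} aᵢ sin(2(2i−1)π ν^{-1/2} x₂) exp(−4π²(2i−1)² t) be the solution of the heat equation ∂ₜu^L = ν∂²_{x₂}u^L with initial data u₀^L, and let ū^L(t,x₂) = u₀^L(x₂) exp(−4π² t). Then there is a constant C > 0 independent of ν such that ‖u^L(t) − ū^L(t)‖_{L^∞(𝕋)} ≤ C t for all t ≥ 0; one may take C = 4π² Σ_{i≥2} |aᵢ|((2i−1)² − 1). -/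
open Real

noncomputable section

lemma exp_sub_exp_le_aux (l m t : ℝ) (hml : m ≤ l) (hm : 0 ≤ m) (ht : 0 ≤ t) :
    |Real.exp (-(l * t)) - Real.exp (-(m * t))| ≤ (l - m) * t := by
  have hle : Real.exp (-(l * t)) ≤ Real.exp (-(m * t)) := by
    apply Real.exp_le_exp.2
    nlinarith
  rw [abs_sub_comm, abs_of_nonneg (by linarith)]
  have key : Real.exp (-(m * t)) - Real.exp (-(l * t))
      = Real.exp (-(m * t)) * (1 - Real.exp (-((l - m) * t))) := by
    rw [mul_sub, mul_one, ← Real.exp_add]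
    ring_nf
  rw [key]
  have h1 : Real.exp (-(m * t)) ≤ 1 := Real.exp_le_one_iff.2 (by nlinarith)
  have h2 : 1 - Real.exp (-((l - m) * t)) ≤ (l - m) * t := by
    have := Real.add_one_le_exp (-((l - m) * t))
    linarith
  have h3 : 0 ≤ 1 - Real.exp (-((l - m) * t)) :=
    sub_nonneg.2 (Real.exp_le_one_iff.2 (by nlinarith))
  calc Real.exp (-(m * t)) * (1 - Real.exp (-((l - m) * t)))
      ≤ 1 * ((l - m) * t) := mul_le_mul h1 h2 h3 zero_le_one
    _ = (l - m) * t := one_mul _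

/-- Comparison of the heat evolution `u^L` of the rescaled triangular wave
`u₀^L(x₂) = T(ν^{-1/2}x₂)` with `ū^L(t,x₂) = u₀^L(x₂)e^{−4π²t}`:
`‖u^L(t) − ū^L(t)‖_{L^∞} ≤ Ct`, with the explicit constant
`C = 4π² Σ_{i≥2} |aᵢ|((2i−1)² − 1)`.  (Here the sequence `a : ℕ → ℝ` lists the sine
coefficients starting from `i = 1`, i.e. `a i` is the coefficient of
`sin(2(2(i+1)−1)πz) = sin(2(2i+1)πz)`; note that the `i = 0` term of the displayed sum
vanishes.) -/
theorem heat_flow_triangular_wave_comparison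
    (a : ℕ → ℝ) (T : ℝ → ℝ)
    (hT : ∀ z : ℝ, T z = ∑' i : ℕ, a i * Real.sin (2 * (2 * (i : ℝ) + 1) * π * z))
    (hsum : Summable fun i : ℕ => |a i| * (2 * (i : ℝ) + 1) ^ 2)
    (ν : ℝ) (hν0 : 0 < ν) (hν1 : ν ≤ 1)
    (hint : ∃ m : ℕ, 0 < m ∧ (m : ℝ) = ν ^ (-(1 / 2) : ℝ))
    (uL : ℝ → ℝ → ℝ)
    (huL : ∀ t x₂ : ℝ, uL t x₂ = ∑' i : ℕ,
      a i * Real.sin (2 * (2 * (i : ℝ) + 1) * π * (ν ^ (-(1 / 2) : ℝ) * x₂)) *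
        Real.exp (-(4 * π ^ 2 * (2 * (i : ℝ) + 1) ^ 2 * t)))
    (ubarL : ℝ → ℝ → ℝ)
    (hubarL : ∀ t x₂ : ℝ, ubarL t x₂ = T (ν ^ (-(1 / 2) : ℝ) * x₂) * Real.exp (-(4 * π ^ 2 * t))) :
    (∀ t, 0 ≤ t → ∀ x₂ : ℝ,
      |uL t x₂ - ubarL t x₂|
        ≤ (4 * π ^ 2 * ∑' i : ℕ, |a i| * ((2 * (i : ℝ) + 1) ^ 2 - 1)) * t) ∧
    ∃ C > (0 : ℝ), ∀ t, 0 ≤ t → ∀ x₂ : ℝ, |uL t x₂ - ubarL t x₂| ≤ C * t := by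
  -- basic summability facts
  have habs : Summable fun i : ℕ => |a i| := by
    apply Summable.of_nonneg_of_le (fun i => abs_nonneg _) _ hsum
    intro i
    nlinarith [abs_nonneg (a i), Nat.cast_nonneg (α := ℝ) i, sq_nonneg ((i : ℝ))]
  have hsumd : Summable fun i : ℕ => |a i| * ((2 * (i : ℝ) + 1) ^ 2 - 1) := by
    have := hsum.sub habs
    simpa [mul_sub] using this
  have hd_nonneg : ∀ i : ℕ, 0 ≤ |a i| * ((2 * (i : ℝ) + 1) ^ 2 - 1) := by
    intro i
    apply mul_nonneg (abs_nonneg _)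
    nlinarith [sq_nonneg ((i : ℝ)), Nat.cast_nonneg (α := ℝ) i]
  have hS_nonneg : 0 ≤ ∑' i : ℕ, |a i| * ((2 * (i : ℝ) + 1) ^ 2 - 1) :=
    tsum_nonneg hd_nonneg
  have hpi : (0 : ℝ) < π := Real.pi_pos
  have main : ∀ t, 0 ≤ t → ∀ x₂ : ℝ,
      |uL t x₂ - ubarL t x₂|
        ≤ (4 * π ^ 2 * ∑' i : ℕ, |a i| * ((2 * (i : ℝ) + 1) ^ 2 - 1)) * t := by
    intro t ht x₂
    set c : ℝ := ν ^ (-(1 / 2) : ℝ) with hc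
    set g : ℕ → ℝ := fun i => a i * Real.sin (2 * (2 * (i : ℝ) + 1) * π * (c * x₂)) with hg
    have hgle : ∀ i, |g i| ≤ |a i| := by
      intro i
      rw [hg]
      simp only [abs_mul]
      calc |a i| * |Real.sin (2 * (2 * (i : ℝ) + 1) * π * (c * x₂))|
          ≤ |a i| * 1 := by
            apply mul_le_mul_of_nonneg_left (abs_le.2 ⟨Real.neg_one_le_sin _, Real.sin_le_one _⟩) (abs_nonneg _)
        _ = |a i| := mul_one _
    have hsg1 : Summable fun i : ℕ =>
        g i * Real.exp (-(4 * π ^ 2 * (2 * (i : ℝ) + 1) ^ 2 * t)) := by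
      apply Summable.of_norm
      apply Summable.of_nonneg_of_le (fun i => norm_nonneg _) _ habs
      intro i
      rw [Real.norm_eq_abs, abs_mul]
      calc |g i| * |Real.exp (-(4 * π ^ 2 * (2 * (i : ℝ) + 1) ^ 2 * t))|
          ≤ |a i| * 1 := by
            apply mul_le_mul (hgle i) _ (abs_nonneg _) (abs_nonneg _)
            rw [abs_of_pos (Real.exp_pos _)]
            apply Real.exp_le_one_iff.2
            have : 0 ≤ 4 * π ^ 2 * (2 * (i : ℝ) + 1) ^ 2 * t := by positivity
            linarith
        _ = |a i| := mul_one _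
    have hsg2 : Summable fun i : ℕ => g i * Real.exp (-(4 * π ^ 2 * t)) := by
      apply Summable.of_norm
      apply Summable.of_nonneg_of_le (fun i => norm_nonneg _) _ habs
      intro i
      rw [Real.norm_eq_abs, abs_mul, abs_of_pos (Real.exp_pos _)]
      calc |g i| * Real.exp (-(4 * π ^ 2 * t))
          ≤ |a i| * 1 := by
            apply mul_le_mul (hgle i) _ (Real.exp_pos _).le (abs_nonneg _)
            apply Real.exp_le_one_iff.2
            nlinarith
        _ = |a i| := mul_one _
    have hub : ubarL t x₂ = ∑' i : ℕ, g i * Real.exp (-(4 * π ^ 2 * t)) := by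
      rw [hubarL, hT, tsum_mul_right]
    have hdiff : uL t x₂ - ubarL t x₂
        = ∑' i : ℕ, (g i * Real.exp (-(4 * π ^ 2 * (2 * (i : ℝ) + 1) ^ 2 * t))
            - g i * Real.exp (-(4 * π ^ 2 * t))) := by
      rw [huL, hub, ← Summable.tsum_sub hsg1 hsg2]
    rw [hdiff]
    have hterm : ∀ i : ℕ,
        |g i * Real.exp (-(4 * π ^ 2 * (2 * (i : ℝ) + 1) ^ 2 * t))
          - g i * Real.exp (-(4 * π ^ 2 * t))|
        ≤ 4 * π ^ 2 * (|a i| * ((2 * (i : ℝ) + 1) ^ 2 - 1)) * t := by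
      intro i
      rw [← mul_sub, abs_mul]
      have hexp : |Real.exp (-(4 * π ^ 2 * (2 * (i : ℝ) + 1) ^ 2 * t))
          - Real.exp (-(4 * π ^ 2 * t))|
          ≤ (4 * π ^ 2 * (2 * (i : ℝ) + 1) ^ 2 - 4 * π ^ 2) * t := by
        have hone : (1 : ℝ) ≤ (2 * (i : ℝ) + 1) ^ 2 := by
          nlinarith [sq_nonneg ((i : ℝ)), Nat.cast_nonneg (α := ℝ) i]
        have hml : 4 * π ^ 2 ≤ 4 * π ^ 2 * (2 * (i : ℝ) + 1) ^ 2 := by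
          nlinarith [sq_nonneg π, hone]
        have := exp_sub_exp_le_aux (4 * π ^ 2 * (2 * (i : ℝ) + 1) ^ 2) (4 * π ^ 2) t
          hml (by positivity) ht
        convert this using 3 <;> ring
      calc |g i| * |Real.exp (-(4 * π ^ 2 * (2 * (i : ℝ) + 1) ^ 2 * t))
            - Real.exp (-(4 * π ^ 2 * t))|
          ≤ |a i| * ((4 * π ^ 2 * (2 * (i : ℝ) + 1) ^ 2 - 4 * π ^ 2) * t) :=
            mul_le_mul (hgle i) hexp (abs_nonneg _) (abs_nonneg _)
        _ = 4 * π ^ 2 * (|a i| * ((2 * (i : ℝ) + 1) ^ 2 - 1)) * t := by ring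
    have hsumbd : Summable fun i : ℕ =>
        4 * π ^ 2 * (|a i| * ((2 * (i : ℝ) + 1) ^ 2 - 1)) * t := by
      have := (hsumd.mul_left (4 * π ^ 2)).mul_right t
      simpa [mul_assoc] using this
    calc |∑' i : ℕ, (g i * Real.exp (-(4 * π ^ 2 * (2 * (i : ℝ) + 1) ^ 2 * t))
            - g i * Real.exp (-(4 * π ^ 2 * t)))|
        ≤ ∑' i : ℕ, |g i * Real.exp (-(4 * π ^ 2 * (2 * (i : ℝ) + 1) ^ 2 * t))
            - g i * Real.exp (-(4 * π ^ 2 * t))| := by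
          simpa using norm_tsum_le_tsum_norm (f := fun i : ℕ =>
            g i * Real.exp (-(4 * π ^ 2 * (2 * (i : ℝ) + 1) ^ 2 * t))
              - g i * Real.exp (-(4 * π ^ 2 * t))) ((hsg1.sub hsg2).abs)
      _ ≤ ∑' i : ℕ, 4 * π ^ 2 * (|a i| * ((2 * (i : ℝ) + 1) ^ 2 - 1)) * t :=
          Summable.tsum_le_tsum hterm ((hsg1.sub hsg2).abs) hsumbd
      _ = (4 * π ^ 2 * ∑' i : ℕ, |a i| * ((2 * (i : ℝ) + 1) ^ 2 - 1)) * t := by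
          rw [tsum_mul_right, tsum_mul_left]
  refine ⟨main, 4 * π ^ 2 * (∑' i : ℕ, |a i| * ((2 * (i : ℝ) + 1) ^ 2 - 1)) + 1,
    by positivity, ?_⟩
  intro t ht x₂
  calc |uL t x₂ - ubarL t x₂|
      ≤ (4 * π ^ 2 * ∑' i : ℕ, |a i| * ((2 * (i : ℝ) + 1) ^ 2 - 1)) * t := main t ht x₂
    _ ≤ (4 * π ^ 2 * (∑' i : ℕ, |a i| * ((2 * (i : ℝ) + 1) ^ 2 - 1)) + 1) * t := by
        apply mul_le_mul_of_nonneg_right _ ht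
        linarith
end
end
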